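/- arXiv:1207.1125 — 3 statements merged into one kernel-verified Lean document; each statement's English description precedes it below -/
import Mathlib

section
/- Assume sup_t‖A(t)‖ ≤ M, let T₀ = β^{−1/2}, and let A₁(t) = U₀(t)⁻¹[A(t) − Ā^g(t)]U₀(t) where U₀ is the unitary propagator with generator βĀ^g. Then there is a constant C (depending only on M) such that for all t ≥ 0, ‖∫₀^t A₁(s) ds‖ ≤ C(β^{−1/2} + β^{1/2} t). -/
open scoped Real
open MeasureTheory intervalIntegral Filter

noncomputable section

abbrev Hs (N : ℕ) : Type := EuclideanSpace ℂ (Fin N)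
abbrev Lop (N : ℕ) : Type := Hs N →L[ℂ] Hs N

/-- The averaging window T₀ = β^{-1/2}. -/
def T0 (β : ℝ) : ℝ := β ^ (-(1:ℝ)/2)

/-- The average of A over the interval [n·T₀, (n+1)·T₀]. -/
def avg {N : ℕ} (A : ℝ → Lop N) (T₀ : ℝ) (n : ℕ) : Lop N :=
  T₀⁻¹ • ∫ s in ((n : ℝ) * T₀)..(((n : ℝ) + 1) * T₀), A s

/-- The piecewise-constant global average: Ā^g(t) = Ā⁽ⁿ⁾ for n·T₀ ≤ t < (n+1)·T₀. -/
def pavg {N : ℕ} (A : ℝ → Lop N) (T₀ : ℝ) (t : ℝ) : Lop N :=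
  avg A T₀ ⌊t / T₀⌋₊

/-!
On each window `[k T₀, (k+1) T₀]` the average `Ā^g` is the constant `Ā⁽ᵏ⁾`, and `A - Ā⁽ᵏ⁾` has
zero integral there. Freezing `U₀` at the left endpoint therefore kills the window integral, and
since `‖U₀'‖ ≤ β M` the error is at most `2 · 2M · βMT₀ · T₀ = 4M²`, using `β T₀² = 1`. There are at
most `t / T₀ = β^{1/2} t` full windows, and the last, partial one contributes at most `2 M T₀`.
-/

open Set

section Lipschitz

variable {E : Type*} [NormedAddCommGroup E] [NormedSpace ℝ E]

theorem norm_sub_left_le_of_hasDerivAt_Ioo {f f' : ℝ → E} {a b C : ℝ} (hab : a < b)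
    (hf : Continuous f) (hf' : ∀ x ∈ Ioo a b, HasDerivAt f (f' x) x)
    (bound : ∀ x ∈ Ioo a b, ‖f' x‖ ≤ C) : ∀ x ∈ Icc a b, ‖f x - f a‖ ≤ C * (x - a) := by
  have hclosed : IsClosed {p : ℝ × ℝ | ‖f p.2 - f p.1‖ ≤ C * |p.2 - p.1|} :=
    isClosed_le (by fun_prop) (by fun_prop)
  have hIoo : Ioo a b ×ˢ Ioo a b ⊆ {p : ℝ × ℝ | ‖f p.2 - f p.1‖ ≤ C * |p.2 - p.1|} :=
    fun p hp => by
      simpa [Real.norm_eq_abs] using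
        (convex_Ioo a b).norm_image_sub_le_of_norm_hasDerivWithin_le
          (fun x hx => (hf' x hx).hasDerivWithinAt) bound hp.1 hp.2
  have hIcc : Icc a b ×ˢ Icc a b ⊆ {p : ℝ × ℝ | ‖f p.2 - f p.1‖ ≤ C * |p.2 - p.1|} := by
    rw [← closure_Ioo hab.ne, ← closure_prod_eq]
    exact hclosed.closure_subset_iff.mpr hIoo
  intro x hx
  simpa [abs_of_nonneg (sub_nonneg.mpr hx.1)] using
    hIcc (mk_mem_prod (left_mem_Icc.mpr hab.le) hx)

end Lipschitz

section Conjugation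

variable {E : Type*} [NormedRing E] [StarRing E] [CStarRing E]

theorem norm_star_mul_mul_sub_le {U V D : E} {K δ : ℝ} (hU : U ∈ unitary E)
    (hV : V ∈ unitary E) (hD : ‖D‖ ≤ K) (hUV : ‖U - V‖ ≤ δ) :
    ‖star U * D * U - star V * D * V‖ ≤ 2 * K * δ := by
  have hδ : 0 ≤ δ := (norm_nonneg _).trans hUV
  have hsplit : star U * D * U - star V * D * V =
      star (U - V) * D * U + star V * D * (U - V) := by
    simp only [star_sub, sub_mul, mul_sub]
    abel
  have h₁ : ‖star (U - V) * D * U‖ ≤ δ * K := by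
    rw [CStarRing.norm_mul_mem_unitary _ hU]
    calc ‖star (U - V) * D‖ ≤ ‖U - V‖ * ‖D‖ := by
          simpa only [norm_star] using norm_mul_le (star (U - V)) D
      _ ≤ δ * K := mul_le_mul hUV hD (norm_nonneg _) hδ
  have h₂ : ‖star V * D * (U - V)‖ ≤ K * δ := by
    calc ‖star V * D * (U - V)‖ ≤ ‖D‖ * ‖U - V‖ := by
          simpa only [CStarRing.norm_mem_unitary_mul _ (Unitary.star_mem hV)]
            using norm_mul_le (star V * D) (U - V)
      _ ≤ K * δ := mul_le_mul hD hUV (norm_nonneg _) ((norm_nonneg _).trans hD)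
  calc _ ≤ δ * K + K * δ := hsplit ▸ (norm_add_le _ _).trans (add_le_add h₁ h₂)
    _ = 2 * K * δ := by ring

theorem norm_integral_star_mul_mul_le [NormedAlgebra ℂ E] [CompleteSpace E] {U D : ℝ → E}
    {a b K δ : ℝ} (hab : a ≤ b) (hU : Continuous U) (hD : Continuous D)
    (hUu : ∀ s ∈ Icc a b, U s ∈ unitary E) (hD₀ : ∫ s in a..b, D s = 0)
    (hDK : ∀ s ∈ Icc a b, ‖D s‖ ≤ K) (hUδ : ∀ s ∈ Icc a b, ‖U s - U a‖ ≤ δ) :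
    ‖∫ s in a..b, star (U s) * D s * U s‖ ≤ 2 * K * δ * (b - a) := by
  set V := U a
  have hfrozen : ∫ s in a..b, star V * D s * V = 0 := by
    have := (ContinuousLinearMap.mulLeftRight ℂ E (star V) V).intervalIntegral_comp_comm
      (hD.intervalIntegrable (μ := volume) a b)
    simp only [ContinuousLinearMap.mulLeftRight_apply] at this
    rw [this, hD₀, mul_zero, zero_mul]
  have hcont : Continuous fun s => star (U s) * D s * U s := by fun_prop
  have hcontV : Continuous fun s => star V * D s * V := by fun_prop
  have hdiff : ∫ s in a..b, star (U s) * D s * U s =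
      ∫ s in a..b, (star (U s) * D s * U s - star V * D s * V) := by
    rw [integral_sub (hcont.intervalIntegrable _ _) (hcontV.intervalIntegrable _ _), hfrozen,
      sub_zero]
  rw [hdiff, ← abs_of_nonneg (sub_nonneg.mpr hab)]
  refine norm_integral_le_of_norm_le_const fun s hs => ?_
  have hs' : s ∈ Icc a b := Ioc_subset_Icc_self (uIoc_of_le hab ▸ hs)
  exact norm_star_mul_mul_sub_le (hUu s hs') (hUu a (left_mem_Icc.mpr hab)) (hDK s hs')
    (hUδ s hs')

end Conjugation

section Window

variable {E : Type*} [NormedAddCommGroup E] [NormedSpace ℝ E]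

theorem norm_integral_le_of_norm_integral_window_le {F : ℝ → E} {T B K t : ℝ} (hT : 0 < T)
    (ht : 0 ≤ t) (hF : ∀ k : ℕ, IntervalIntegrable F volume (k * T) ((k + 1) * T))
    (hB : ∀ k : ℕ, ‖∫ s in k * T..(k + 1) * T, F s‖ ≤ B) (hK : ∀ s, ‖F s‖ ≤ K) :
    ‖∫ s in 0..t, F s‖ ≤ ⌊t / T⌋₊ * B + K * T := by
  set n := ⌊t / T⌋₊
  have hnt : n * T ≤ t := (le_div_iff₀ hT).mp (Nat.floor_le (div_nonneg ht hT.le))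
  have htn : t < (n + 1) * T := (div_lt_iff₀ hT).mp (Nat.lt_floor_add_one _)
  have hF' : ∀ k < n, IntervalIntegrable F volume ((k : ℕ) * T) ((k + 1 : ℕ) * T) := by
    intro k _
    exact_mod_cast hF k
  have hhead : ∫ s in 0..n * T, F s = ∑ k ∈ Finset.range n, ∫ s in k * T..(k + 1) * T, F s := by
    simpa using (sum_integral_adjacent_intervals hF').symm
  have htail : IntervalIntegrable F volume (n * T) t :=
    (hF n).mono_set (uIcc_subset_uIcc_left (mem_uIcc_of_le hnt htn.le))
  have hK₀ : 0 ≤ K := (norm_nonneg _).trans (hK 0)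
  have htail_le : ‖∫ s in n * T..t, F s‖ ≤ K * T := by
    refine (norm_integral_le_of_norm_le_const fun s _ => hK s).trans ?_
    rw [abs_of_nonneg (sub_nonneg.mpr hnt)]
    exact mul_le_mul_of_nonneg_left (by linarith) hK₀
  have hhead_le : ‖∫ s in 0..n * T, F s‖ ≤ n * B := by
    rw [hhead]
    refine (norm_sum_le _ _).trans ?_
    simpa using Finset.sum_le_sum fun k (_ : k ∈ Finset.range n) => hB k
  have hhead_int : IntervalIntegrable F volume 0 (n * T) := by
    simpa using IntervalIntegrable.trans_iterate hF'
  rw [← integral_add_adjacent_intervals hhead_int htail]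
  exact (norm_add_le _ _).trans (add_le_add hhead_le htail_le)

end Window

section Average

variable {N : ℕ} {A : ℝ → Lop N} {T : ℝ}

theorem pavg_eq_avg (hT : 0 < T) {k : ℕ} {s : ℝ} (h₁ : k * T ≤ s) (h₂ : s < (k + 1) * T) :
    pavg A T s = avg A T k := by
  have hs : 0 ≤ s / T := div_nonneg ((by positivity : (0 : ℝ) ≤ k * T).trans h₁) hT.le
  rw [pavg, (Nat.floor_eq_iff hs).mpr ⟨(le_div_iff₀ hT).mpr h₁, (div_lt_iff₀ hT).mpr h₂⟩]

theorem pavg_ae_eq_avg (hT : 0 < T) (k : ℕ) :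
    ∀ᵐ s, s ∈ uIoc (k * T) ((k + 1) * T) → pavg A T s = avg A T k := by
  filter_upwards [volume.ae_ne ((k + 1) * T)] with s hne hs
  rw [uIoc_of_le (by nlinarith)] at hs
  exact pavg_eq_avg hT hs.1.le (lt_of_le_of_ne hs.2 hne)

theorem norm_avg_le {M : ℝ} (hT : 0 < T) (hA : ∀ s, ‖A s‖ ≤ M) (k : ℕ) : ‖avg A T k‖ ≤ M := by
  have hint := norm_integral_le_of_norm_le_const (a := k * T) (b := (k + 1) * T) fun s _ => hA s
  rw [show ((k : ℝ) + 1) * T - k * T = T by ring, abs_of_pos hT] at hint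
  rw [avg, norm_smul, norm_inv, Real.norm_of_nonneg hT.le, inv_mul_le_iff₀ hT, mul_comm T M]
  exact hint

theorem integral_sub_avg_eq_zero (hT : T ≠ 0) (k : ℕ)
    (hA : IntervalIntegrable A volume (k * T) ((k + 1) * T)) :
    ∫ s in k * T..(k + 1) * T, (A s - avg A T k) = 0 := by
  rw [integral_sub hA intervalIntegrable_const, intervalIntegral.integral_const, avg, smul_smul,
    show ((k : ℝ) + 1) * T - k * T = T by ring, mul_inv_cancel₀ hT, one_smul, sub_self]

end Average

section Propagator

variable {N : ℕ} {A U₀ : ℝ → Lop N} {β M T : ℝ}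

theorem norm_star_mul_sub_pavg_mul_le (hT : 0 < T) (hAM : ∀ t, ‖A t‖ ≤ M) {U : Lop N}
    (hU : U ∈ unitary (Lop N)) (s : ℝ) : ‖star U * (A s - pavg A T s) * U‖ ≤ 2 * M := by
  rw [CStarRing.norm_mul_mem_unitary _ hU, CStarRing.norm_mem_unitary_mul _ (Unitary.star_mem hU)]
  have hpavg : ‖pavg A T s‖ ≤ M := norm_avg_le hT hAM _
  exact (norm_sub_le _ _).trans (by linarith [hAM s])

theorem norm_propagator_sub_le (hβ : 0 ≤ β) (hT : 0 < T) (hAM : ∀ t, ‖A t‖ ≤ M)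
    (hU : Continuous U₀) (hUu : ∀ t, U₀ t ∈ unitary (Lop N)) {k : ℕ}
    (hderiv : ∀ t ∈ Ioo (k * T) ((k + 1) * T),
      HasDerivAt U₀ ((-(Complex.I) * (β : ℂ)) • (pavg A T t * U₀ t)) t) :
    ∀ s ∈ Icc (k * T) ((k + 1) * T), ‖U₀ s - U₀ (k * T)‖ ≤ β * M * (s - k * T) := by
  refine norm_sub_left_le_of_hasDerivAt_Ioo (by nlinarith) hU hderiv fun t _ => ?_
  rw [norm_smul, CStarRing.norm_mul_mem_unitary _ (hUu t)]
  simp only [norm_mul, norm_neg, Complex.norm_I, Complex.norm_real, Real.norm_of_nonneg hβ,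
    one_mul]
  exact mul_le_mul_of_nonneg_left (norm_avg_le hT hAM _) hβ

theorem norm_integral_window_le (hβ : 0 ≤ β) (hT : 0 < T) (hA : Continuous A)
    (hAM : ∀ t, ‖A t‖ ≤ M) (hU : Continuous U₀) (hUu : ∀ t, U₀ t ∈ unitary (Lop N)) {k : ℕ}
    (hderiv : ∀ t ∈ Ioo (k * T) ((k + 1) * T),
      HasDerivAt U₀ ((-(Complex.I) * (β : ℂ)) • (pavg A T t * U₀ t)) t) :
    ‖∫ s in k * T..(k + 1) * T, star (U₀ s) * (A s - pavg A T s) * U₀ s‖ ≤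
      4 * M ^ 2 * β * T ^ 2 := by
  have hwindow : k * T ≤ (k + 1) * T := by nlinarith
  have hM : 0 ≤ M := (norm_nonneg _).trans (hAM 0)
  have hDK (s : ℝ) : ‖A s - avg A T k‖ ≤ 2 * M :=
    (norm_sub_le _ _).trans (by linarith [hAM s, norm_avg_le hT hAM k])
  have hUδ : ∀ s ∈ Icc (k * T) ((k + 1) * T), ‖U₀ s - U₀ (k * T)‖ ≤ β * M * T := fun s hs =>
    (norm_propagator_sub_le hβ hT hAM hU hUu hderiv s hs).trans
      (mul_le_mul_of_nonneg_left (by linarith [hs.2]) (mul_nonneg hβ hM))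
  rw [integral_congr_ae ((pavg_ae_eq_avg hT k).mono fun s h hs => by rw [h hs])]
  have hbound := norm_integral_star_mul_mul_le (D := fun s => A s - avg A T k) hwindow hU
    (hA.sub continuous_const) (fun s _ => hUu s)
    (integral_sub_avg_eq_zero hT.ne' k (hA.intervalIntegrable _ _)) (fun s _ => hDK s) hUδ
  exact hbound.trans_eq (by ring)

theorem intervalIntegrable_star_mul_sub_pavg_mul (hT : 0 < T) (hA : Continuous A)
    (hU : Continuous U₀) (k : ℕ) :
    IntervalIntegrable (fun s => star (U₀ s) * (A s - pavg A T s) * U₀ s) volume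
      (k * T) ((k + 1) * T) := by
  -- instance search does not find `ContinuousStar (Lop N)`, so `fun_prop` cannot be used here
  have hstar : Continuous fun s => star (U₀ s) := (star_isometry (E := Lop N)).continuous.comp hU
  have hG : Continuous fun s => star (U₀ s) * (A s - avg A T k) * U₀ s :=
    (hstar.mul (hA.sub continuous_const)).mul hU
  refine (hG.intervalIntegrable _ _).congr_ae ?_
  refine (ae_restrict_iff' measurableSet_uIoc).mpr
    ((pavg_ae_eq_avg (A := A) hT k).mono fun s h hs => ?_)
  simp only [h hs]

end Propagator

section T0

variable {β : ℝ}

theorem T0_pos (hβ : 0 < β) : 0 < T0 β := Real.rpow_pos_of_pos hβ _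

theorem mul_T0_sq (hβ : 0 < β) : β * T0 β ^ 2 = 1 := by
  rw [T0, ← Real.rpow_natCast, ← Real.rpow_mul hβ.le]
  norm_num [Real.rpow_neg_one, hβ.ne']

theorem inv_T0 (hβ : 0 < β) : (T0 β)⁻¹ = β ^ ((1 : ℝ) / 2) := by
  rw [T0, ← Real.rpow_neg hβ.le]
  norm_num

end T0

/-- With T₀ = β^{-1/2} and A₁ = U₀⁻¹[A − Ā^g]U₀,
‖∫₀^t A₁(s) ds‖ ≤ C(β^{-1/2} + β^{1/2}t) with C depending only on M. -/
theorem stmt7 (M : ℝ) :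
    ∃ C > 0, ∀ (N : ℕ) (β : ℝ), 0 < β → β < 1 →
    ∀ (A U₀ : ℝ → Lop N),
    Continuous A → (∀ t ≥ (0:ℝ), IsSelfAdjoint (A t)) → (∀ t, ‖A t‖ ≤ M) →
    U₀ 0 = 1 → Continuous U₀ → (∀ t, U₀ t ∈ unitary (Lop N)) →
    (∀ n : ℕ, ∀ t ∈ Set.Ioo ((n : ℝ) * T0 β) (((n : ℝ) + 1) * T0 β),
      HasDerivAt U₀ ((-(Complex.I) * (β : ℂ)) • (pavg A (T0 β) t * U₀ t)) t) →
    ∀ t ≥ (0:ℝ),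
      ‖∫ s in (0:ℝ)..t, (star (U₀ s) * (A s - pavg A (T0 β) s) * U₀ s)‖ ≤
        C * (β ^ (-(1:ℝ)/2) + β ^ ((1:ℝ)/2) * t) := by
  refine ⟨4 * M ^ 2 + 2 * |M| + 1, by positivity, ?_⟩
  intro N β hβ _ A U₀ hA _ hAM _ hU hUu hderiv t ht
  have hM : 0 ≤ M := (norm_nonneg _).trans (hAM 0)
  have hT := T0_pos hβ
  have hwindow (k : ℕ) := (norm_integral_window_le hβ.le hT hA hAM hU hUu (hderiv k)).trans_eq
    (by rw [mul_assoc, mul_T0_sq hβ, mul_one])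
  have hbound := norm_integral_le_of_norm_integral_window_le hT ht
    (intervalIntegrable_star_mul_sub_pavg_mul hT hA hU) hwindow
    fun s => norm_star_mul_sub_pavg_mul_le hT hAM (hUu s) s
  have hn : (⌊t / T0 β⌋₊ : ℝ) ≤ β ^ ((1 : ℝ) / 2) * t :=
    (Nat.floor_le (div_nonneg ht hT.le)).trans_eq (by rw [div_eq_mul_inv, inv_T0 hβ, mul_comm])
  have hsqrt : 0 ≤ β ^ ((1 : ℝ) / 2) * t := mul_nonneg (Real.rpow_nonneg hβ.le _) ht
  refine hbound.trans ?_
  rw [abs_of_nonneg hM, ← T0]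
  nlinarith [mul_le_mul_of_nonneg_left hn (by positivity : (0 : ℝ) ≤ 4 * M ^ 2)]
end
end

section
/- In the setting of the previous theorem, if additionally |T_f − T_i| ≤ 1/β, then sup_{T_i ≤ t ≤ T_f} ‖c₁(t) − c₁(T_i)‖ ≤ C β^{1/2}. -/
/-! Write `c₁' = L(t) c₁` with `L = -iβ A₁`. Then `c₁ t - c₁ T_i` is the first Duhamel term
`(∫_{T_i}^t L) c₁(T_i)`, of size `β ‖∫ A₁‖ ≤ 2 C₀ β^{1/2}` on a window of length `1/β`, plus a
remainder `g` solving `g' = L (g + (∫ L) c₁(T_i))`. Gronwall with rate `‖L‖ ≤ 2Mβ` over a time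
`1/β` enlarges the first term only by the factor `e^{2M}`. -/

open scoped Real
open MeasureTheory intervalIntegral Filter

noncomputable section

open Set Real

theorem gronwallBound_δ0_Kmul (K r x : ℝ) :
    gronwallBound 0 K (K * r) x = r * (exp (K * x) - 1) := by
  rcases eq_or_ne K 0 with rfl | hK
  · simp [gronwallBound_K0]
  · rw [gronwallBound_of_K_ne_0 hK, mul_div_cancel_left₀ _ hK]
    ring

section LinearODE

variable {𝕜 E : Type*} [RCLike 𝕜] [NormedAddCommGroup E] [NormedSpace 𝕜 E] [NormedSpace ℝ E]
  [IsScalarTower ℝ 𝕜 E] [CompleteSpace E]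

theorem norm_sub_le_mul_exp_of_norm_integral_le {L : ℝ → E →L[𝕜] E} {c : ℝ → E} {a b K δ : ℝ}
    (hL : Continuous L) (hc : ∀ t, HasDerivAt c (L t (c t)) t)
    (hLK : ∀ t ∈ Icc a b, ‖L t‖ ≤ K) (hδ : ∀ t ∈ Icc a b, ‖∫ s in a..t, L s‖ ≤ δ) :
    ∀ t ∈ Icc a b, ‖c t - c a‖ ≤ δ * ‖c a‖ * exp (K * (t - a)) := by
  set D : ℝ → E →L[𝕜] E := fun u => ∫ s in a..u, L s
  have hD : ∀ x, HasDerivAt D (L x) x := fun x =>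
    integral_hasDerivAt_right (hL.intervalIntegrable _ _)
      hL.aestronglyMeasurable.stronglyMeasurableAtFilter hL.continuousAt
  have hDc : ∀ x ∈ Icc a b, ‖D x (c a)‖ ≤ δ * ‖c a‖ := fun x hx =>
    ((D x).le_opNorm _).trans (mul_le_mul_of_nonneg_right (hδ x hx) (norm_nonneg _))
  set g : ℝ → E := fun u => c u - c a - D u (c a)
  have hg : ∀ x, HasDerivAt g (L x (g x + D x (c a))) x := by
    intro x
    have hDx : HasDerivAt (fun u => D u (c a)) (L x (c a)) x :=
      ((ContinuousLinearMap.apply 𝕜 E (c a)).restrictScalars ℝ).hasFDerivAt.comp_hasDerivAt x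
        (hD x)
    have hgD : g x + D x (c a) = c x - c a := by simp [g]
    refine (((hc x).sub_const (c a)).sub hDx).congr_deriv ?_
    rw [hgD, map_sub]
  have hg_le : ∀ x ∈ Icc a b, ‖g x‖ ≤ δ * ‖c a‖ * (exp (K * (x - a)) - 1) := by
    intro x hx
    rw [← gronwallBound_δ0_Kmul]
    refine norm_le_gronwallBound_of_norm_deriv_right_le
      (fun y _ => (hg y).continuousAt.continuousWithinAt) (fun y _ => (hg y).hasDerivWithinAt)
      (by simp [g, D]) (fun y hy => ?_) x hx
    have hy' : y ∈ Icc a b := Ico_subset_Icc_self hy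
    have hK : 0 ≤ K := (norm_nonneg _).trans (hLK y hy')
    calc ‖L y (g y + D y (c a))‖ ≤ K * (‖g y‖ + ‖D y (c a)‖) :=
          ((L y).le_opNorm _).trans <|
            mul_le_mul (hLK y hy') (norm_add_le _ _) (norm_nonneg _) hK
      _ ≤ K * ‖g y‖ + K * (δ * ‖c a‖) := by nlinarith [hDc y hy']
  intro t ht
  calc ‖c t - c a‖ = ‖g t + D t (c a)‖ := by simp [g]
    _ ≤ ‖g t‖ + ‖D t (c a)‖ := norm_add_le _ _
    _ ≤ δ * ‖c a‖ * (exp (K * (t - a)) - 1) + δ * ‖c a‖ := add_le_add (hg_le t ht) (hDc t ht)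
    _ = δ * ‖c a‖ * exp (K * (t - a)) := by ring

end LinearODE

theorem mul_rpow_neg_half_add_le {β x : ℝ} (hβ : 0 < β) (hx : β * x ≤ 1) :
    β * (β ^ (-(1:ℝ)/2) + β ^ ((1:ℝ)/2) * x) ≤ 2 * β ^ ((1:ℝ)/2) := by
  have hsqrt : β * β ^ (-(1:ℝ)/2) = β ^ ((1:ℝ)/2) := by
    rw [← rpow_one_add' hβ.le (by norm_num)]
    norm_num
  have : β ^ ((1:ℝ)/2) * (β * x) ≤ β ^ ((1:ℝ)/2) :=
    mul_le_of_le_one_right (rpow_nonneg hβ.le _) hx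
  linear_combination hsqrt + this

/-- if moreover |T_f − T_i| ≤ 1/β then
sup_{T_i ≤ t ≤ T_f}‖c₁(t) − c₁(T_i)‖ ≤ C·β^{1/2}. -/
theorem stmt9 (M C₀ : ℝ) (hM : 0 < M) (hC₀ : 0 < C₀) :
    ∃ C > 0, ∀ (N : ℕ) (β T_i T_f : ℝ), 0 < β → β < 1 → T_i ≤ T_f →
    ∀ (A₁ : ℝ → Lop N) (c₁ : ℝ → Hs N),
    Continuous A₁ → (∀ t, ‖A₁ t‖ ≤ 2 * M) →
    (∀ t ∈ Set.Icc T_i T_f,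
      ‖∫ s in T_i..t, A₁ s‖ ≤ C₀ * (β ^ (-(1:ℝ)/2) + β ^ ((1:ℝ)/2) * (t - T_i))) →
    (∀ t, HasDerivAt c₁ ((-(Complex.I) * (β : ℂ)) • (A₁ t) (c₁ t)) t) →
    (∀ t ∈ Set.Icc T_i T_f, ‖c₁ t‖ = ‖c₁ T_i‖) → ‖c₁ T_i‖ ≤ 1 →
    T_f - T_i ≤ 1 / β →
    ∀ t ∈ Set.Icc T_i T_f, ‖c₁ t - c₁ T_i‖ ≤ C * β ^ ((1:ℝ)/2) := by
  refine ⟨2 * C₀ * exp (2 * M), by positivity, ?_⟩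
  intro N β T_i T_f hβ _ _ A₁ c₁ hA hAM hAint hc _ hc_le hT t ht
  have hwindow : ∀ s ∈ Icc T_i T_f, β * (s - T_i) ≤ 1 := fun s hs =>
    calc β * (s - T_i) ≤ β * (1 / β) := by gcongr; linarith [hs.2]
      _ = 1 := mul_one_div_cancel hβ.ne'
  have hnorm : ‖-Complex.I * (β : ℂ)‖ = β := by simp [abs_of_pos hβ]
  have hL : ∀ s, ‖(-Complex.I * (β : ℂ)) • A₁ s‖ ≤ β * (2 * M) := fun s => by
    rw [norm_smul, hnorm]
    exact mul_le_mul_of_nonneg_left (hAM s) hβ.le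
  have hLint : ∀ s ∈ Icc T_i T_f,
      ‖∫ u in T_i..s, (-Complex.I * (β : ℂ)) • A₁ u‖ ≤ 2 * C₀ * β ^ ((1:ℝ)/2) := fun s hs =>
    calc ‖∫ u in T_i..s, (-Complex.I * (β : ℂ)) • A₁ u‖ = β * ‖∫ u in T_i..s, A₁ u‖ := by
          rw [intervalIntegral.integral_smul, norm_smul, hnorm]
      _ ≤ C₀ * (β * (β ^ (-(1:ℝ)/2) + β ^ ((1:ℝ)/2) * (s - T_i))) := by
          rw [mul_left_comm]; exact mul_le_mul_of_nonneg_left (hAint s hs) hβ.le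
      _ ≤ C₀ * (2 * β ^ ((1:ℝ)/2)) :=
          mul_le_mul_of_nonneg_left (mul_rpow_neg_half_add_le hβ (hwindow s hs)) hC₀.le
      _ = 2 * C₀ * β ^ ((1:ℝ)/2) := by ring
  have hexp : exp (β * (2 * M) * (t - T_i)) ≤ exp (2 * M) := by
    have := mul_le_mul_of_nonneg_left (hwindow t ht) (mul_pos two_pos hM).le
    exact exp_le_exp.mpr (by linarith)
  calc ‖c₁ t - c₁ T_i‖ ≤ 2 * C₀ * β ^ ((1:ℝ)/2) * ‖c₁ T_i‖ * exp (β * (2 * M) * (t - T_i)) :=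
        norm_sub_le_mul_exp_of_norm_integral_le (L := fun s => (-Complex.I * (β : ℂ)) • A₁ s)
          (hA.const_smul (-Complex.I * (β : ℂ))) hc (fun s _ => hL s) hLint t ht
    _ ≤ 2 * C₀ * β ^ ((1:ℝ)/2) * 1 * exp (2 * M) := by gcongr
    _ = 2 * C₀ * exp (2 * M) * β ^ ((1:ℝ)/2) := by ring
end
end

section
/- Let c₁ solve i·c₁' = βA₁(t)c₁ with ‖c₁(t)‖ = 1 and ‖A₁(t)‖ ≤ 2M. Define the normal-form transform Ũ(t)f = (I + iβ∫_{T_i}^t A₁(s)ds)f and c̃₁(t) = Ũ(t)c₁(t). Then c̃₁ satisfies i·c̃₁'(t) = iβ²(∫_{T_i}^t A₁(s)ds)A₁(t)c₁(t), and if ‖∫_{T_i}^t A₁(s)ds‖ ≤ C(β^{−1/2} + β^{1/2}(t−T_i)) then sup_{T_i ≤ t ≤ T_f} ‖c̃₁(t) − c̃₁(T_i)‖ ≤ C'β^{3/2}(|T_f−T_i| + β|T_f−T_i|²). -/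
open scoped Real
open MeasureTheory intervalIntegral Filter

noncomputable section

/-!
Differentiating `c̃ = (I + iβB)c`, where `B(t) = ∫_{T_i}^t A₁`, with `i c' = βA₁c`, the two
first-order terms `-iβA₁c` and `iβA₁c` cancel, leaving `β² B A₁ c`. Since `‖A₁‖ ≤ 2M`, `‖c‖ = 1` and
`‖B(t)‖ ≤ C(β^{-1/2} + β^{1/2}Δ)` with `Δ = T_f - T_i`, the mean value inequality gives
`‖c̃(t) - c̃(T_i)‖ ≤ 2|M||C|β²(β^{-1/2} + β^{1/2}Δ)Δ = 2|M||C|β^{3/2}(Δ + βΔ²)`.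
-/

section NormalForm

variable {𝕜 : Type*} [RCLike 𝕜] {E : Type*} [NormedAddCommGroup E] [NormedSpace 𝕜 E]
  [NormedSpace ℝ E] [IsScalarTower ℝ 𝕜 E]
  {B : ℝ → E →L[𝕜] E} {A : E →L[𝕜] E} {u : ℝ → E} {u' : E} {t : ℝ}

-- `HasDerivAt.clm_apply` requires the operators to be linear over the parameter field `ℝ`.
theorem HasDerivAt.clm_apply_of_real (hB : HasDerivAt B A t) (hu : HasDerivAt u u' t) :
    HasDerivAt (fun τ => B τ (u τ)) (A (u t) + B t u') t := by
  let R := ContinuousLinearMap.restrictScalarsL 𝕜 E E ℝ ℝ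
  exact (R.hasFDerivAt.comp_hasDerivAt t hB).clm_apply hu

theorem HasDerivAt.add_smul_clm_apply_of_add_eq_zero {a b : 𝕜} (hab : a + b = 0)
    (hB : HasDerivAt B A t) (hu : HasDerivAt u (a • A (u t)) t) :
    HasDerivAt (fun τ => u τ + b • B τ (u τ)) ((b * a) • B t (A (u t))) t := by
  refine (hu.add ((hB.clm_apply_of_real hu).const_smul b)).congr_deriv ?_
  rw [map_smul, smul_add, smul_smul, ← add_assoc, ← add_smul, hab, zero_smul, zero_add]

end NormalForm

theorem sq_mul_rpow_half_add_mul {β : ℝ} (hβ : 0 < β) (Δ : ℝ) :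
    β ^ 2 * (β ^ (-(1:ℝ)/2) + β ^ ((1:ℝ)/2) * Δ) * Δ = β ^ ((3:ℝ)/2) * (Δ + β * Δ ^ 2) := by
  have h₁ : β ^ 2 * β ^ (-(1:ℝ)/2) = β ^ ((3:ℝ)/2) := by
    rw [← Real.rpow_natCast, ← Real.rpow_add hβ]; norm_num
  have h₂ : β ^ 2 * β ^ ((1:ℝ)/2) = β * β ^ ((3:ℝ)/2) := by
    rw [← Real.rpow_natCast, ← Real.rpow_add hβ, ← Real.rpow_one_add' hβ.le (by norm_num)]
    norm_num
  linear_combination Δ * h₁ + Δ ^ 2 * h₂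

/-- the normal form transform c̃₁(t) = (I + iβ∫_{T_i}^t A₁)c₁(t) satisfies
i·c̃₁' = iβ²(∫_{T_i}^t A₁)A₁c₁, and under the integral bound
sup‖c̃₁(t) − c̃₁(T_i)‖ ≤ C'β^{3/2}(|T_f−T_i| + β|T_f−T_i|²). -/
theorem stmt10 (M C : ℝ) :
    ∃ C' > 0, ∀ (N : ℕ) (β T_i T_f : ℝ), 0 < β → β < 1 → T_i ≤ T_f →
    ∀ (A₁ : ℝ → Lop N) (c₁ : ℝ → Hs N),
    Continuous A₁ → (∀ t, IsSelfAdjoint (A₁ t)) → (∀ t, ‖A₁ t‖ ≤ 2 * M) →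
    (∀ t, HasDerivAt c₁ ((-(Complex.I) * (β : ℂ)) • (A₁ t) (c₁ t)) t) →
    (∀ t, ‖c₁ t‖ = 1) →
    (∀ t ∈ Set.Icc T_i T_f,
      HasDerivAt (fun τ => c₁ τ + (Complex.I * (β : ℂ)) • (∫ s in T_i..τ, A₁ s) (c₁ τ))
        (((β : ℂ) ^ 2) • (∫ s in T_i..t, A₁ s) ((A₁ t) (c₁ t))) t) ∧
    ((∀ t ∈ Set.Icc T_i T_f,
        ‖∫ s in T_i..t, A₁ s‖ ≤ C * (β ^ (-(1:ℝ)/2) + β ^ ((1:ℝ)/2) * (t - T_i))) →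
      ∀ t ∈ Set.Icc T_i T_f,
        ‖(c₁ t + (Complex.I * (β : ℂ)) • (∫ s in T_i..t, A₁ s) (c₁ t)) - c₁ T_i‖ ≤
          C' * β ^ ((3:ℝ)/2) * ((T_f - T_i) + β * (T_f - T_i) ^ 2)) := by
  refine ⟨2 * |M| * |C| + 1, by positivity, ?_⟩
  intro N β T_i T_f hβ _ _ A₁ c₁ hA _ hA_le hc hc_norm
  set B : ℝ → Lop N := fun τ => ∫ s in T_i..τ, A₁ s
  have hderiv (t : ℝ) : HasDerivAt (fun τ => c₁ τ + (Complex.I * (β : ℂ)) • B τ (c₁ τ))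
      (((β : ℂ) ^ 2) • B t (A₁ t (c₁ t))) t := by
    have hB : HasDerivAt B (A₁ t) t := (hA.integral_hasStrictDerivAt T_i t).hasDerivAt
    have hcoef : Complex.I * β * (-Complex.I * β) = (β : ℂ) ^ 2 := by
      linear_combination -(β : ℂ) ^ 2 * Complex.I_sq
    rw [← hcoef]
    exact hB.add_smul_clm_apply_of_add_eq_zero (by ring) (hc t)
  refine ⟨fun t _ => hderiv t, fun hB_le t ht => ?_⟩
  set Δ := T_f - T_i
  have hΔ : 0 ≤ Δ := sub_nonneg.2 (ht.1.trans ht.2)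
  have hderiv_le : ∀ x ∈ Set.Ico T_i T_f, ‖((β : ℂ) ^ 2) • B x (A₁ x (c₁ x))‖ ≤
      2 * |M| * |C| * (β ^ 2 * (β ^ (-(1:ℝ)/2) + β ^ ((1:ℝ)/2) * Δ)) := by
    intro x hx
    have hBx : ‖B x‖ ≤ |C| * (β ^ (-(1:ℝ)/2) + β ^ ((1:ℝ)/2) * Δ) := by
      have hx₀ : 0 ≤ x - T_i := sub_nonneg.2 hx.1
      refine (hB_le x (Set.Ico_subset_Icc_self hx)).trans
        (mul_le_mul (le_abs_self C) ?_ (by positivity) (abs_nonneg C))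
      gcongr
      exact sub_le_sub_right hx.2.le T_i
    have hAx : ‖A₁ x‖ ≤ 2 * |M| := (hA_le x).trans (by linarith [le_abs_self M])
    calc ‖((β : ℂ) ^ 2) • B x (A₁ x (c₁ x))‖ ≤ β ^ 2 * (‖B x‖ * (‖A₁ x‖ * ‖c₁ x‖)) := by
          rw [norm_smul, norm_pow, Complex.norm_real, Real.norm_of_nonneg hβ.le]
          gcongr
          exact (B x).le_opNorm_of_le ((A₁ x).le_opNorm _)
      _ ≤ β ^ 2 * ((|C| * (β ^ (-(1:ℝ)/2) + β ^ ((1:ℝ)/2) * Δ)) * (2 * |M| * 1)) := by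
          rw [hc_norm]; gcongr
      _ = _ := by ring
  have hmvt := norm_image_sub_le_of_norm_deriv_le_segment'
    (fun x _ => (hderiv x).hasDerivWithinAt) hderiv_le t ht
  simp only [B, integral_same, zero_apply, smul_zero, add_zero] at hmvt
  calc _ ≤ _ := hmvt
    _ ≤ 2 * |M| * |C| * (β ^ 2 * (β ^ (-(1:ℝ)/2) + β ^ ((1:ℝ)/2) * Δ)) * Δ :=
        mul_le_mul_of_nonneg_left (sub_le_sub_right ht.2 T_i) (by positivity)
    _ ≤ (2 * |M| * |C| + 1) * β ^ ((3:ℝ)/2) * (Δ + β * Δ ^ 2) := by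
        rw [mul_assoc (2 * |M| * |C|), sq_mul_rpow_half_add_mul hβ,
          mul_assoc (2 * |M| * |C| + 1)]
        exact mul_le_mul_of_nonneg_right (by linarith) (by positivity)
end
end
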